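/- Let b ∈ G with g_b = K for some K > 0. Then there exists b′ ∈ G with g_{b′} = K − 1 such that some b̄ ∈ R(b′) has the same type function as b, i.e., φ_{b̄} = φ_b. -/

import Mathlib

open Finset

/-- The partial sum `Σ_{k=0}^{i-1} a_{k j}` as an integer. -/
def psum (a : ℕ → ℕ → ℕ) (i j : ℕ) : ℤ := ∑ k ∈ Finset.range i, (a k j : ℤ)

/-- `b ∈ B`, i.e. `0 ≤ b_j < Σ_{i=0}^{n} a_{ij}` for all `j`. -/
def memB (n : ℕ) (a : ℕ → ℕ → ℕ) (b : ℕ → ℤ) : Prop :=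
  ∀ j < n, 0 ≤ b j ∧ b j < psum a (n + 1) j

/-- `φ` is the type function of `b`:
`Σ_{k=0}^{φ(j)-1} a_{kj} ≤ b_j < Σ_{k=0}^{φ(j)} a_{kj}` for all `j < n`. -/
def IsTypeFun (n : ℕ) (a : ℕ → ℕ → ℕ) (b : ℕ → ℤ) (φ : ℕ → ℕ) : Prop :=
  ∀ j < n, φ j ≤ n ∧ psum a (φ j) j ≤ b j ∧ b j < psum a (φ j + 1) j

/-- The type vector `t_{b,i} = #{j : φ_b(j) = i}`. -/
def typeVec (n : ℕ) (φ : ℕ → ℕ) (i : ℕ) : ℕ :=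
  ((Finset.range n).filter fun j => φ j = i).card

/-- `ib` is the row content of a point with type function `φ`:
the largest `i ∈ {0,…,n}` with `t_{b,i} = 0`. -/
def IsRowContent (n : ℕ) (φ : ℕ → ℕ) (ib : ℕ) : Prop :=
  ib ≤ n ∧ typeVec n φ ib = 0 ∧ ∀ i ≤ n, typeVec n φ i = 0 → i ≤ ib

/-- The vector `a(b)`: `a(b)_j = 0` if `φ_b(j) < i(b)` and `a(b)_j = a_{i(b) j}` otherwise. -/
def ashift (a : ℕ → ℕ → ℕ) (φ : ℕ → ℕ) (ib j : ℕ) : ℤ :=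
  if φ j < ib then 0 else (a ib j : ℤ)

/-- `b' ∈ R(b) = {b - a(b) + c : c ∈ A_{i(b)}}`. -/
def memR (n : ℕ) (a : ℕ → ℕ → ℕ) (b : ℕ → ℤ) (φ : ℕ → ℕ) (ib : ℕ) (b' : ℕ → ℤ) : Prop :=
  ∀ j < n, b j - ashift a φ ib j ≤ b' j ∧ b' j ≤ b j - ashift a φ ib j + (a ib j : ℤ)

/-- The greedy condition: `Σ_{i=0}^{I} t_{b,i} ≤ I + 1` for all `I < n`. -/
def memG (n : ℕ) (φ : ℕ → ℕ) : Prop :=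
  ∀ I < n, ∑ i ∈ Finset.range (I + 1), typeVec n φ i ≤ I + 1

/-- A point is mixed if `t_{b,i} ≤ 1` for all `i ∈ {0,…,n}`. -/
def Mixed (n : ℕ) (φ : ℕ → ℕ) : Prop := ∀ i ≤ n, typeVec n φ i ≤ 1

/-- `Ib = I_b`: for non-mixed `b` the largest `i` with `t_{b,i} ≥ 2`; for mixed `b`, `0`. -/
def IsIb (n : ℕ) (φ : ℕ → ℕ) (Ib : ℕ) : Prop :=
  (2 ≤ typeVec n φ Ib ∧ ∀ i, 2 ≤ typeVec n φ i → i ≤ Ib) ∨ (Mixed n φ ∧ Ib = 0)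

/-- `g_b = #{i < I_b : t_{b,i} = 0}`. -/
def gval (n : ℕ) (φ : ℕ → ℕ) (Ib : ℕ) : ℕ :=
  ((Finset.range Ib).filter fun i => typeVec n φ i = 0).card

/-! Only the type function matters: if `φ'` moves some coordinates of `φ` one level down, each
into a level below the row content `i'` of `φ'`, then lowering the corner point of type `φ` by one
in those coordinates gives `b'` with that corner in `R(b')`. So it suffices to remove one gap
below `I_b` by such a move. Let `i*` be the last empty level below `I_b`. If every prefix ending
in `(i*, I_b]` has slack, shifting all of `(i*, I_b]` down by one moves the gap from `i*` to `I_b`,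
and `I_b` drops by one. Otherwise a tight prefix forces, by pigeonhole, an empty level above
`I_b`, so the row content stays above `I_b` while one coordinate per level cascades down into
`i*`. -/

lemma psum_succ (a : ℕ → ℕ → ℕ) (i j : ℕ) : psum a (i + 1) j = psum a i j + a i j :=
  sum_range_succ _ _

lemma psum_nonneg (a : ℕ → ℕ → ℕ) (i j : ℕ) : 0 ≤ psum a i j :=
  sum_nonneg fun _ _ => Int.natCast_nonneg _

lemma psum_le_psum (a : ℕ → ℕ → ℕ) {i i' : ℕ} (j : ℕ) (h : i ≤ i') :
    psum a i j ≤ psum a i' j :=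
  sum_le_sum_of_subset_of_nonneg (range_subset_range.2 h) fun _ _ _ => Int.natCast_nonneg _

section Geometry

variable {n : ℕ} {a : ℕ → ℕ → ℕ}

lemma memB_of_isTypeFun {b : ℕ → ℤ} {φ : ℕ → ℕ} (h : IsTypeFun n a b φ) : memB n a b :=
  fun j hj =>
    have ⟨hφ, hlo, hhi⟩ := h j hj
    ⟨(psum_nonneg a _ j).trans hlo, hhi.trans_le (psum_le_psum a j (by omega))⟩

lemma isTypeFun_psum (hpos : ∀ i ≤ n, ∀ j < n, 0 < a i j) {φ : ℕ → ℕ}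
    (hφn : ∀ j < n, φ j ≤ n) : IsTypeFun n a (fun j => psum a (φ j) j) φ := fun j hj => by
  have := hpos _ (hφn j hj) j hj
  refine ⟨hφn j hj, le_rfl, ?_⟩
  simp only [psum_succ]
  omega

def Lowers (n : ℕ) (φ φ' : ℕ → ℕ) (ib : ℕ) : Prop :=
  ∀ j < n, φ' j = φ j ∨ φ' j + 1 = φ j ∧ φ' j < ib

lemma Lowers.mono {φ φ' : ℕ → ℕ} {ib ib' : ℕ} (h : Lowers n φ φ' ib) (hle : ib ≤ ib') :
    Lowers n φ φ' ib' :=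
  fun j hj => (h j hj).imp_right fun h => ⟨h.1, h.2.trans_le hle⟩

lemma exists_reach_of_lowers (hpos : ∀ i ≤ n, ∀ j < n, 0 < a i j) {φ φ' : ℕ → ℕ} {ib : ℕ}
    (hφn : ∀ j < n, φ j ≤ n) (hlow : Lowers n φ φ' ib) (hib : ib ≤ n) :
    ∃ b', memB n a b' ∧ IsTypeFun n a b' φ' ∧
      ∃ bbar, memR n a b' φ' ib bbar ∧ IsTypeFun n a bbar φ := by
  set b' : ℕ → ℤ := fun j => psum a (φ j) j - if φ' j = φ j then 0 else 1
  have hb' : IsTypeFun n a b' φ' := by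
    intro j hj
    rcases hlow j hj with h | ⟨h, -⟩
    · simpa only [b', h, if_true, sub_zero] using isTypeFun_psum hpos hφn j hj
    · have := hpos _ (show φ' j ≤ n by have := hφn j hj; omega) j hj
      simp only [b', ← h, psum_succ]
      refine ⟨by have := hφn j hj; omega, by omega, by omega⟩
  refine ⟨b', memB_of_isTypeFun hb', hb', _, fun j hj => ?_, isTypeFun_psum hpos hφn⟩
  have := hpos ib hib j hj
  simp only [ashift, b']
  rcases hlow j hj with h | ⟨h, hlt⟩
  · simp only [h, if_true]
    split_ifs <;> omega
  · simp only [if_pos hlt, if_neg (show φ' j ≠ φ j by omega)]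
    omega

end Geometry

lemma sum_range_succ_le_of_eq_zero_of_le_one {f : ℕ → ℕ} {c I : ℕ} (hcI : c ≤ I) (h0 : f c = 0)
    (hle : ∀ i, c < i → i ≤ I → f i ≤ 1) :
    ∑ i ∈ range (I + 1), f i ≤ ∑ i ∈ range c, f i + (I - c) := by
  rw [← sum_range_add_sum_Ico _ (by omega : c ≤ I + 1),
    sum_eq_sum_Ico_succ_bot (by omega : c < I + 1), h0]
  have : ∑ i ∈ Ico (c + 1) (I + 1), f i ≤ I - c := by
    simpa using sum_le_card_nsmul (Ico (c + 1) (I + 1)) f 1 fun i hi => by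
      have := mem_Ico.1 hi
      exact hle i (by omega) (by omega)
  omega

section TypeVec

variable {n : ℕ} {φ : ℕ → ℕ}

lemma typeVec_eq_zero_of_lt (hφn : ∀ j < n, φ j ≤ n) {i : ℕ} (hi : n < i) :
    typeVec n φ i = 0 :=
  card_eq_zero.2 <| filter_eq_empty_iff.2 fun j hj h => by
    have := hφn j (mem_range.1 hj)
    omega

lemma sum_range_typeVec (hφn : ∀ j < n, φ j ≤ n) :
    ∑ i ∈ range (n + 1), typeVec n φ i = n := by
  simpa [typeVec] using (card_eq_sum_card_fiberwise (f := φ) (s := range n)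
    (t := range (n + 1)) fun j hj => mem_range.2 (Nat.lt_succ_of_le (hφn j (mem_range.1 hj)))).symm

lemma sum_range_typeVec_le (hG : memG n φ) {J : ℕ} (hJ : J ≤ n) :
    ∑ i ∈ range J, typeVec n φ i ≤ J := by
  cases J with
  | zero => simp
  | succ I => exact hG I hJ

/-- Pigeonhole: the `n` coordinates cannot fill more than `n` levels. -/
lemma sum_range_succ_typeVec_le_of_occupied (hφn : ∀ j < n, φ j ≤ n) {J : ℕ} (hJ : J ≤ n)
    (hocc : ∀ i, J < i → i ≤ n → 1 ≤ typeVec n φ i) :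
    ∑ i ∈ range (J + 1), typeVec n φ i ≤ J := by
  have htail : n - J ≤ ∑ i ∈ Ico (J + 1) (n + 1), typeVec n φ i := by
    simpa using card_nsmul_le_sum (Ico (J + 1) (n + 1)) (typeVec n φ) 1 fun i hi => by
      have := mem_Ico.1 hi
      exact hocc i (by omega) (by omega)
  have htot := sum_range_typeVec hφn
  rw [← sum_range_add_sum_Ico _ (by omega : J + 1 ≤ n + 1)] at htot
  omega

lemma exists_heavy_between (hG : memG n φ) {w c : ℕ} (hc : c ≤ n)
    (htight : ∑ i ∈ range c, typeVec n φ i = c) (hwc : w < c) (hw : typeVec n φ w = 0) :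
    ∃ i, w < i ∧ i < c ∧ 2 ≤ typeVec n φ i := by
  by_contra! h
  have hband := sum_range_succ_le_of_eq_zero_of_le_one (I := c - 1) (by omega) hw fun i hi hic => by
    have := h i hi (by omega)
    omega
  rw [Nat.sub_add_cancel (by omega)] at hband
  have := sum_range_typeVec_le hG (show w ≤ n by omega)
  omega

lemma gval_eq_of_iff {ψ : ℕ → ℕ} {c d : ℕ}
    (h : ∀ i, i < d ∧ typeVec n ψ i = 0 ↔ i < c ∧ typeVec n φ i = 0) :
    gval n ψ d = gval n φ c := by
  unfold gval
  congr 1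
  ext i
  simpa using h i

lemma gval_succ_of_eq_zero {c : ℕ} (h : typeVec n φ c = 0) :
    gval n φ (c + 1) = gval n φ c + 1 := by
  unfold gval
  rw [range_add_one, filter_insert, if_pos h, card_insert_of_notMem (by simp)]

lemma isRowContent_findGreatest {z : ℕ} (hz : typeVec n φ z = 0) (hzn : z ≤ n) :
    IsRowContent n φ (Nat.findGreatest (fun i => typeVec n φ i = 0) n) :=
  ⟨Nat.findGreatest_le n, Nat.findGreatest_spec (P := fun i => typeVec n φ i = 0) hzn hz,
    fun _ hi h => Nat.le_findGreatest hi h⟩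

end TypeVec

section Lowering

variable {n : ℕ} {φ : ℕ → ℕ} {p : ℕ → Prop} [DecidablePred p]

def lowerWhere (φ : ℕ → ℕ) (p : ℕ → Prop) [DecidablePred p] (j : ℕ) : ℕ :=
  if p j then φ j - 1 else φ j

def movedAt (n : ℕ) (φ : ℕ → ℕ) (p : ℕ → Prop) [DecidablePred p] (i : ℕ) : ℕ :=
  ((range n).filter fun j => p j ∧ φ j = i).card

lemma typeVec_lowerWhere_add_movedAt (hp : ∀ j < n, p j → 1 ≤ φ j) (i : ℕ) :
    typeVec n (lowerWhere φ p) i + movedAt n φ p i = typeVec n φ i + movedAt n φ p (i + 1) := by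
  simp only [typeVec, movedAt, card_filter, ← sum_add_distrib]
  refine sum_congr rfl fun j hj => ?_
  unfold lowerWhere
  by_cases hpj : p j
  · have := hp j (mem_range.1 hj) hpj
    simp only [hpj, if_true, true_and]
    split_ifs <;> omega
  · simp [hpj]

lemma sum_range_typeVec_lowerWhere (hp : ∀ j < n, p j → 1 ≤ φ j) (J : ℕ) :
    ∑ i ∈ range J, typeVec n (lowerWhere φ p) i =
      ∑ i ∈ range J, typeVec n φ i + movedAt n φ p J := by
  induction J with
  | zero =>
    suffices movedAt n φ p 0 = 0 by simp [this]
    refine card_eq_zero.2 (filter_eq_empty_iff.2 fun j hj h => ?_)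
    have := hp j (mem_range.1 hj) h.1
    omega
  | succ J ih =>
    have := typeVec_lowerWhere_add_movedAt hp J
    rw [sum_range_succ, sum_range_succ, ih]
    omega

lemma lowers_lowerWhere {ib : ℕ} (hp : ∀ j < n, p j → 1 ≤ φ j ∧ φ j ≤ ib) :
    Lowers n φ (lowerWhere φ p) ib := fun j hj => by
  unfold lowerWhere
  split_ifs with h
  · have := hp j hj h
    omega
  · exact Or.inl rfl

lemma movedAt_band (lo hi i : ℕ) :
    movedAt n φ (fun j => lo < φ j ∧ φ j ≤ hi) i =
      if lo < i ∧ i ≤ hi then typeVec n φ i else 0 := by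
  simp only [movedAt, typeVec, card_filter]
  split_ifs with h
  · exact sum_congr rfl fun j _ => by split_ifs <;> omega
  · exact sum_eq_zero fun j _ => by split_ifs <;> omega

lemma movedAt_first {lo hi : ℕ} (hocc : ∀ i, lo < i → i ≤ hi → 1 ≤ typeVec n φ i) (i : ℕ) :
    movedAt n φ (fun j : ℕ => lo < φ j ∧ φ j ≤ hi ∧ ∀ k < j, φ k ≠ φ j) i =
      if lo < i ∧ i ≤ hi then 1 else 0 := by
  split_ifs with h
  · have hex : ∃ j, j < n ∧ φ j = i := by
      obtain ⟨j, hj⟩ := card_pos.1 (hocc i h.1 h.2)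
      exact ⟨j, by simpa using hj⟩
    obtain ⟨hlt, heq⟩ := Nat.find_spec hex
    refine card_eq_one.2 ⟨Nat.find hex, ext fun j => ?_⟩
    simp only [mem_filter, mem_range, mem_singleton]
    constructor
    · rintro ⟨hj, ⟨-, -, hfirst⟩, rfl⟩
      refine le_antisymm ?_ (Nat.find_min' hex ⟨hj, rfl⟩)
      by_contra! hgt
      exact hfirst _ hgt heq
    · rintro rfl
      refine ⟨hlt, ⟨by omega, by omega, fun k hk hk' => ?_⟩, heq⟩
      exact Nat.find_min hex hk ⟨by omega, hk'.trans heq⟩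
  · exact card_eq_zero.2 (filter_eq_empty_iff.2 fun j _ hj => by omega)

end Lowering

/-- `Ib` plays the role of `I_b` and `istar` is the last empty level below it. -/
structure IsLastGapBelow (n : ℕ) (φ : ℕ → ℕ) (istar Ib : ℕ) : Prop where
  lt : istar < Ib
  empty : typeVec n φ istar = 0
  occupied : ∀ i, istar < i → i < Ib → 1 ≤ typeVec n φ i
  heavy : 2 ≤ typeVec n φ Ib
  light : ∀ i, Ib < i → typeVec n φ i ≤ 1

section Predecessor

variable {n : ℕ} {φ : ℕ → ℕ}

lemma IsLastGapBelow.le {istar Ib : ℕ} (h : IsLastGapBelow n φ istar Ib)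
    (hφn : ∀ j < n, φ j ≤ n) : Ib ≤ n := by
  by_contra! hlt
  have := typeVec_eq_zero_of_lt hφn hlt
  have := h.heavy
  omega

lemma exists_isLastGapBelow {Ib : ℕ} (hIb : IsIb n φ Ib) (hg : 0 < gval n φ Ib) :
    ∃ istar, IsLastGapBelow n φ istar Ib ∧ gval n φ Ib = gval n φ istar + 1 := by
  obtain ⟨h2, hmax⟩ := hIb.resolve_right (by rintro ⟨-, rfl⟩; simp [gval] at hg)
  obtain ⟨w, hw⟩ := card_pos.1 hg
  rw [mem_filter, mem_range] at hw
  set istar := Nat.findGreatest (fun i => typeVec n φ i = 0) (Ib - 1)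
  have h0 : typeVec n φ istar = 0 :=
    Nat.findGreatest_spec (P := fun i => typeVec n φ i = 0) (by omega : w ≤ Ib - 1) hw.2
  have hlt : istar < Ib := by
    have := Nat.findGreatest_le (P := fun i => typeVec n φ i = 0) (Ib - 1)
    omega
  have hocc : ∀ i, istar < i → i < Ib → 1 ≤ typeVec n φ i := fun i h1 h2 =>
    Nat.pos_of_ne_zero <|
      Nat.findGreatest_is_greatest (P := fun i => typeVec n φ i = 0) h1 (by omega)
  refine ⟨istar, ⟨hlt, h0, hocc, h2, fun i hi => ?_⟩, ?_⟩
  · by_contra! h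
    have := hmax i h
    omega
  · rw [← gval_succ_of_eq_zero h0]
    refine gval_eq_of_iff fun i => ⟨fun ⟨hi, hz⟩ => ⟨?_, hz⟩, fun ⟨hi, hz⟩ => ⟨by omega, hz⟩⟩
    by_contra! h
    have := hocc i (by omega) hi
    omega

/-- Shift every level in `(lo, hi]` down by one; the empty level moves from `lo` to `hi`. -/
lemma exists_shift (hG : memG n φ) {lo hi : ℕ} (hlohi : lo < hi) (h0 : typeVec n φ lo = 0)
    (hslack : ∀ J, lo < J → J ≤ hi → ∑ i ∈ range (J + 1), typeVec n φ i ≤ J) :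
    ∃ φ', Lowers n φ φ' hi ∧ memG n φ' ∧
      (∀ i, i < lo ∨ hi < i → typeVec n φ' i = typeVec n φ i) ∧
      (∀ i, lo ≤ i → i < hi → typeVec n φ' i = typeVec n φ (i + 1)) ∧
      typeVec n φ' hi = 0 := by
  have hp : ∀ j < n, lo < φ j ∧ φ j ≤ hi → 1 ≤ φ j := fun _ _ h => by omega
  have ht := typeVec_lowerWhere_add_movedAt hp
  simp only [movedAt_band] at ht
  refine ⟨lowerWhere φ fun j => lo < φ j ∧ φ j ≤ hi, lowers_lowerWhere fun j _ h => ⟨by omega, h.2⟩,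
    fun I hI => ?_, fun i _ => ?_, fun i h1 _ => ?_, ?_⟩
  · rw [sum_range_typeVec_lowerWhere hp, movedAt_band]
    split_ifs with h
    · rw [← sum_range_succ]
      exact hslack _ h.1 h.2
    · exact hG I hI
  · have := ht i
    split_ifs at this <;> omega
  · have := ht i
    obtain rfl | h1 := h1.eq_or_lt <;> split_ifs at this <;> omega
  · have := ht hi
    split_ifs at this <;> omega

/-- Move the first coordinate of every level in `(lo, m]` one level down. -/
lemma exists_cascade (hG : memG n φ) {lo m : ℕ} (hlom : lo < m) (h0 : typeVec n φ lo = 0)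
    (hone : ∀ i, lo < i → i < m → typeVec n φ i = 1) (hm : 1 ≤ typeVec n φ m) :
    ∃ φ', Lowers n φ φ' m ∧ memG n φ' ∧
      (∀ i, i < lo ∨ m < i → typeVec n φ' i = typeVec n φ i) ∧
      (∀ i, lo ≤ i → i < m → typeVec n φ' i = 1) ∧
      typeVec n φ' m + 1 = typeVec n φ m := by
  have hocc : ∀ i, lo < i → i ≤ m → 1 ≤ typeVec n φ i := fun i h1 h2 => by
    rcases h2.lt_or_eq with h2 | rfl
    · exact (hone i h1 h2).ge
    · exact hm
  have hp : ∀ j < n, (lo < φ j ∧ φ j ≤ m ∧ ∀ k < j, φ k ≠ φ j) → 1 ≤ φ j :=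
    fun _ _ h => by omega
  have ht := typeVec_lowerWhere_add_movedAt hp
  simp only [movedAt_first hocc] at ht
  refine ⟨lowerWhere φ fun j => lo < φ j ∧ φ j ≤ m ∧ ∀ k < j, φ k ≠ φ j,
    lowers_lowerWhere fun j _ h => ⟨by omega, h.2.1⟩, fun I hI => ?_, fun i _ => ?_,
    fun i h1 h2 => ?_, ?_⟩
  · rw [sum_range_typeVec_lowerWhere hp, movedAt_first hocc]
    split_ifs with h
    · have := sum_range_succ_le_of_eq_zero_of_le_one (I := I) (by omega) h0
        fun i h1 h2 => (hone i h1 (by omega)).le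
      have := sum_range_typeVec_le hG (show lo ≤ n by omega)
      omega
    · exact hG I hI
  · have := ht i
    split_ifs at this <;> omega
  · have ht_i := ht i
    obtain rfl | h1 := h1.eq_or_lt
    · split_ifs at ht_i <;> omega
    · have := hone i h1 h2
      split_ifs at ht_i <;> omega
  · have := ht m
    split_ifs at this <;> omega

lemma exists_isIb_of_light_above {ψ : ℕ → ℕ} {c : ℕ}
    (hsame : ∀ i < c, typeVec n ψ i = typeVec n φ i) (hlight : ∀ i, c ≤ i → typeVec n ψ i ≤ 1)
    (hheavy : ∀ w < c, typeVec n φ w = 0 → ∃ i, w < i ∧ i < c ∧ 2 ≤ typeVec n φ i) :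
    ∃ Ib', IsIb n ψ Ib' ∧ gval n ψ Ib' = gval n φ c := by
  by_cases hex : ∃ i < c, 2 ≤ typeVec n φ i
  · obtain ⟨i₀, hi₀, h2⟩ := hex
    set Ib' := Nat.findGreatest (fun i => 2 ≤ typeVec n φ i) (c - 1)
    have hle : Ib' ≤ c - 1 := Nat.findGreatest_le _
    have hmax : ∀ i < c, 2 ≤ typeVec n φ i → i ≤ Ib' := fun i hi h =>
      Nat.le_findGreatest (P := fun i => 2 ≤ typeVec n φ i) (by omega) h
    have hspec : 2 ≤ typeVec n φ Ib' :=
      Nat.findGreatest_spec (P := fun i => 2 ≤ typeVec n φ i) (by omega : i₀ ≤ c - 1) h2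
    refine ⟨Ib', Or.inl ⟨by rwa [hsame _ (by omega)], fun i hi => ?_⟩, gval_eq_of_iff fun i => ?_⟩
    · have hic : i < c := by
        by_contra! h
        have := hlight i h
        omega
      exact hmax i hic (by rwa [← hsame i hic])
    · constructor
      · rintro ⟨hi, hz⟩
        exact ⟨by omega, by rwa [← hsame i (by omega)]⟩
      · rintro ⟨hi, hz⟩
        obtain ⟨k, hik, hkc, hk⟩ := hheavy i hi hz
        exact ⟨hik.trans_le (hmax k hkc hk), by rwa [hsame i hi]⟩
  · push Not at hex
    refine ⟨0, Or.inr ⟨fun i _ => ?_, rfl⟩, gval_eq_of_iff fun i =>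
      ⟨fun h => absurd h.1 (Nat.not_lt_zero _), fun ⟨hi, hz⟩ => ?_⟩⟩
    · rcases lt_or_ge i c with hic | hic
      · have := hex i hic
        rw [hsame i hic]
        omega
      · exact hlight i hic
    · obtain ⟨k, -, hkc, hk⟩ := hheavy i hi hz
      have := hex k hkc
      omega

lemma exists_lowering_of_slack (hφn : ∀ j < n, φ j ≤ n) (hG : memG n φ) {istar Ib : ℕ}
    (hgap : IsLastGapBelow n φ istar Ib)
    (hslack : ∀ J, istar < J → J ≤ Ib → ∑ i ∈ range (J + 1), typeVec n φ i ≤ J) :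
    ∃ φ' ib' Ib', Lowers n φ φ' ib' ∧ memG n φ' ∧ IsRowContent n φ' ib' ∧ IsIb n φ' Ib' ∧
      gval n φ' Ib' = gval n φ istar := by
  obtain ⟨φ', hlow, hG', hout, hin, htop⟩ := exists_shift hG hgap.lt hgap.empty hslack
  have hIbn := hgap.le hφn
  have hlt := hgap.lt
  refine ⟨φ', _, Ib - 1, hlow.mono (Nat.le_findGreatest hIbn htop), hG',
    isRowContent_findGreatest htop hIbn, Or.inl ⟨?_, fun i hi => ?_⟩, gval_eq_of_iff fun i => ?_⟩
  · rw [hin _ (by omega) (by omega), Nat.sub_add_cancel (by omega)]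
    exact hgap.heavy
  · by_contra! h
    obtain rfl | h := (show Ib ≤ i by omega).eq_or_lt
    · omega
    · have := hgap.light i h
      rw [hout i (Or.inr h)] at hi
      omega
  · constructor
    · rintro ⟨hi, hz⟩
      rcases lt_or_ge i istar with h | h
      · exact ⟨h, by rwa [← hout i (Or.inl h)]⟩
      · have := hgap.occupied (i + 1) (by omega) (by omega)
        rw [hin i h (by omega)] at hz
        omega
    · rintro ⟨hi, hz⟩
      exact ⟨by omega, by rwa [hout i (Or.inl hi)]⟩

lemma IsLastGapBelow.exists_empty_above (hφn : ∀ j < n, φ j ≤ n) {istar Ib J : ℕ}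
    (hgap : IsLastGapBelow n φ istar Ib) (hJ₁ : istar < J) (hJ₂ : J ≤ Ib)
    (hJ : J < ∑ i ∈ range (J + 1), typeVec n φ i) :
    ∃ z, Ib < z ∧ z ≤ n ∧ typeVec n φ z = 0 := by
  by_contra! h
  have := sum_range_succ_typeVec_le_of_occupied hφn (hJ₂.trans (hgap.le hφn)) fun i hi hin => by
    rcases lt_trichotomy i Ib with hi' | rfl | hi'
    · exact hgap.occupied i (by omega) hi'
    · exact hgap.heavy.trans' (by omega)
    · exact Nat.pos_of_ne_zero (h i hi' hin)
  omega

lemma IsLastGapBelow.sum_range_eq_of_tight (hφn : ∀ j < n, φ j ≤ n) (hG : memG n φ) {istar Ib J : ℕ}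
    (hgap : IsLastGapBelow n φ istar Ib) (hone : ∀ i, istar < i → i < Ib → typeVec n φ i = 1)
    (h2 : typeVec n φ Ib = 2) (hJ₁ : istar < J) (hJ₂ : J ≤ Ib)
    (hJ : J < ∑ i ∈ range (J + 1), typeVec n φ i) :
    ∑ i ∈ range istar, typeVec n φ i = istar := by
  have hband := sum_range_succ_le_of_eq_zero_of_le_one (I := J - 1) (by omega) hgap.empty
    fun i h1 h2 => (hone i h1 (by omega)).le
  rw [Nat.sub_add_cancel (by omega)] at hband
  have hJle : typeVec n φ J ≤ 2 := by
    rcases hJ₂.lt_or_eq with h | rfl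
    · exact (hone J hJ₁ h).trans_le (by omega)
    · exact h2.le
  have := sum_range_typeVec_le hG (hgap.lt.le.trans (hgap.le hφn))
  rw [sum_range_succ] at hJ
  omega

lemma IsLastGapBelow.exists_isIb_of_cascade {φ' : ℕ → ℕ} {istar Ib m : ℕ}
    (hgap : IsLastGapBelow n φ istar Ib) (hm : istar < m) (hmIb : m ≤ Ib)
    (hm2 : 2 ≤ typeVec n φ m) (hout : ∀ i, i < istar ∨ m < i → typeVec n φ' i = typeVec n φ i)
    (hin : ∀ i, istar ≤ i → i < m → typeVec n φ' i = 1)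
    (htop : typeVec n φ' m + 1 = typeVec n φ m) (hA : m < Ib ∨ 3 ≤ typeVec n φ m) :
    IsIb n φ' Ib ∧ gval n φ' Ib = gval n φ istar := by
  have h2 : 2 ≤ typeVec n φ' Ib := by
    rcases hmIb.lt_or_eq with h | rfl
    · rw [hout Ib (Or.inr h)]
      exact hgap.heavy
    · omega
  refine ⟨Or.inl ⟨h2, fun i hi => ?_⟩, gval_eq_of_iff fun i => ⟨fun ⟨hi, hz⟩ => ?_,
    fun ⟨hi, hz⟩ => ⟨hi.trans hgap.lt, by rwa [hout i (Or.inl hi)]⟩⟩⟩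
  · by_contra! h
    have := hgap.light i h
    rw [hout i (Or.inr (by omega))] at hi
    omega
  · rcases lt_or_ge i istar with h | h
    · exact ⟨h, by rwa [← hout i (Or.inl h)]⟩
    rcases lt_trichotomy i m with h' | rfl | h'
    · have := hin i h h'
      omega
    · omega
    · have := hgap.occupied i (by omega) hi
      rw [hout i (Or.inr h')] at hz
      omega

/-- Cascade down from the first heavy level `m` above `istar`, which fills the gap at `istar`. If
`m` was the top heavy level and only just heavy, the tight prefix puts a heavy level after every
earlier gap, so the new top heavy level still has exactly the gaps below `istar` beneath it. -/
lemma exists_lowering_of_tight (hφn : ∀ j < n, φ j ≤ n) (hG : memG n φ) {istar Ib J : ℕ}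
    (hgap : IsLastGapBelow n φ istar Ib) (hJ₁ : istar < J) (hJ₂ : J ≤ Ib)
    (hJ : J < ∑ i ∈ range (J + 1), typeVec n φ i) :
    ∃ φ' ib' Ib', Lowers n φ φ' ib' ∧ memG n φ' ∧ IsRowContent n φ' ib' ∧ IsIb n φ' Ib' ∧
      gval n φ' Ib' = gval n φ istar := by
  obtain ⟨z, hIbz, hzn, hz⟩ := hgap.exists_empty_above hφn hJ₁ hJ₂ hJ
  obtain ⟨m, ⟨hm, hm2⟩, hmin⟩ : ∃ m, (istar < m ∧ 2 ≤ typeVec n φ m) ∧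
      ∀ k < m, ¬(istar < k ∧ 2 ≤ typeVec n φ k) :=
    have hex : ∃ m, istar < m ∧ 2 ≤ typeVec n φ m := ⟨Ib, hgap.lt, hgap.heavy⟩
    ⟨Nat.find hex, Nat.find_spec hex, fun _ => Nat.find_min hex⟩
  have hmIb : m ≤ Ib := not_lt.1 fun h => hmin Ib h ⟨hgap.lt, hgap.heavy⟩
  have hone : ∀ i, istar < i → i < m → typeVec n φ i = 1 := fun i h1 h2 => by
    have := hgap.occupied i h1 (by omega)
    have := hmin i h2
    omega
  obtain ⟨φ', hlow, hG', hout, hin, htop⟩ := exists_cascade hG hm hgap.empty hone (by omega)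
  have hz' : typeVec n φ' z = 0 := by rwa [hout z (Or.inr (by omega))]
  suffices ∃ Ib', IsIb n φ' Ib' ∧ gval n φ' Ib' = gval n φ istar by
    obtain ⟨Ib', hIb', hg'⟩ := this
    exact ⟨φ', _, Ib', hlow.mono ((show m ≤ z by omega).trans (Nat.le_findGreatest hzn hz')),
      hG', isRowContent_findGreatest hz' hzn, hIb', hg'⟩
  by_cases hA : m < Ib ∨ 3 ≤ typeVec n φ m
  · exact ⟨Ib, hgap.exists_isIb_of_cascade hm hmIb hm2 hout hin htop hA⟩
  obtain rfl : m = Ib := by omega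
  have htight := hgap.sum_range_eq_of_tight hφn hG hone (by omega) hJ₁ hJ₂ hJ
  refine exists_isIb_of_light_above (fun i hi => hout i (Or.inl hi)) (fun i hi => ?_)
    fun w hw h0 => exists_heavy_between hG (by omega) htight hw h0
  rcases lt_trichotomy i m with h | rfl | h
  · exact (hin i hi h).le
  · omega
  · rw [hout i (Or.inr h)]
    exact hgap.light i h

lemma exists_lowering (hφn : ∀ j < n, φ j ≤ n) (hG : memG n φ) {istar Ib : ℕ}
    (hgap : IsLastGapBelow n φ istar Ib) :
    ∃ φ' ib' Ib', Lowers n φ φ' ib' ∧ memG n φ' ∧ IsRowContent n φ' ib' ∧ IsIb n φ' Ib' ∧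
      gval n φ' Ib' = gval n φ istar := by
  by_cases hslack : ∀ J, istar < J → J ≤ Ib → ∑ i ∈ range (J + 1), typeVec n φ i ≤ J
  · exact exists_lowering_of_slack hφn hG hgap hslack
  · push Not at hslack
    obtain ⟨J, hJ₁, hJ₂, hJ⟩ := hslack
    exact exists_lowering_of_tight hφn hG hgap hJ₁ hJ₂ hJ

end Predecessor

theorem exists_predecessor_with_smaller_g_general
    (n : ℕ) (a : ℕ → ℕ → ℕ)
    (hpos : ∀ i ≤ n, ∀ j < n, 0 < a i j)
    (b : ℕ → ℤ)
    (φ : ℕ → ℕ) (hφ : IsTypeFun n a b φ)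
    (hG : memG n φ)
    (Ib : ℕ) (hIb : IsIb n φ Ib)
    (K : ℕ) (hK : 0 < K) (hg : gval n φ Ib = K) :
    ∃ (b' : ℕ → ℤ) (φ' : ℕ → ℕ) (ib' Ib' : ℕ),
      memB n a b' ∧ IsTypeFun n a b' φ' ∧ memG n φ' ∧
      IsRowContent n φ' ib' ∧ IsIb n φ' Ib' ∧ gval n φ' Ib' = K - 1 ∧
      ∃ bbar : ℕ → ℤ, memR n a b' φ' ib' bbar ∧ IsTypeFun n a bbar φ := by
  have hφn : ∀ j < n, φ j ≤ n := fun j hj => (hφ j hj).1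
  obtain ⟨istar, hgap, hsucc⟩ := exists_isLastGapBelow hIb (hg ▸ hK)
  obtain ⟨φ', ib', Ib', hlow, hG', hrc, hIb', hg'⟩ := exists_lowering hφn hG hgap
  obtain ⟨b', hb', hφ', bbar, hR, hbar⟩ := exists_reach_of_lowers hpos hφn hlow hrc.1
  exact ⟨b', φ', ib', Ib', hb', hφ', hG', hrc, hIb', by omega, bbar, hR, hbar⟩

theorem exists_predecessor_with_smaller_g
    (n : ℕ) (hn : 0 < n) (a : ℕ → ℕ → ℕ)
    (hpos : ∀ i ≤ n, ∀ j < n, 0 < a i j)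
    (hord : ∀ j < n, ∀ i i' : ℕ, i ≤ i' → i' < n → a i j ≤ a i' j)
    (b : ℕ → ℤ) (hb : memB n a b)
    (φ : ℕ → ℕ) (hφ : IsTypeFun n a b φ)
    (hG : memG n φ)
    (Ib : ℕ) (hIb : IsIb n φ Ib)
    (K : ℕ) (hK : 0 < K) (hg : gval n φ Ib = K) :
    ∃ (b' : ℕ → ℤ) (φ' : ℕ → ℕ) (ib' Ib' : ℕ),
      memB n a b' ∧ IsTypeFun n a b' φ' ∧ memG n φ' ∧
      IsRowContent n φ' ib' ∧ IsIb n φ' Ib' ∧ gval n φ' Ib' = K - 1 ∧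
      ∃ bbar : ℕ → ℤ, memR n a b' φ' ib' bbar ∧ IsTypeFun n a bbar φ :=
  exists_predecessor_with_smaller_g_general n a hpos b φ hφ hG Ib hIb K hK hg
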